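/- For every integer k ≥ 1, the Taylor coefficients c_n = [s^n](1-s)^{k-1/2} satisfy c_n = O(n^{-(2k+1)/2}) and ∑_{n≥0} c_n P(n) = 0 for every polynomial P of degree ≤ k - 1. -/

import Mathlib

/-- `c k n = [s^n](1-s)^{k-1/2} = (-1)^n C(k - 1/2, n)`. -/
noncomputable def cSeq (k n : ℕ) : ℝ :=
  (-1 : ℝ) ^ n * (∏ i ∈ Finset.range n, ((k : ℝ) - 1 / 2 - i)) / (Nat.factorial n)

section aux

open Finset Filter Real

noncomputable def bSeq (α : ℝ) (n : ℕ) : ℝ :=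
  (-1 : ℝ) ^ n * (∏ i ∈ Finset.range n, (α - i)) / (Nat.factorial n)

lemma bSeq_zero (α : ℝ) : bSeq α 0 = 1 := by simp [bSeq]

lemma bSeq_succ (α : ℝ) (n : ℕ) :
    bSeq α (n + 1) = bSeq α n * (((n : ℝ) - α) / (n + 1)) := by
  have h1 : ((Nat.factorial n : ℝ)) ≠ 0 := Nat.cast_ne_zero.2 (Nat.factorial_ne_zero n)
  have h2 : ((n : ℝ) + 1) ≠ 0 := by positivity
  rw [bSeq, bSeq, Finset.prod_range_succ, Nat.factorial_succ]
  push_cast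
  field_simp
  ring

lemma abs_bSeq_succ (α : ℝ) (n : ℕ) (hn : α ≤ n) :
    |bSeq α (n + 1)| = |bSeq α n| * (((n : ℝ) - α) / (n + 1)) := by
  rw [bSeq_succ, abs_mul, abs_of_nonneg (div_nonneg (by linarith) (by positivity) : (0:ℝ) ≤ ((n : ℝ) - α) / (n + 1))]

lemma key_ineq {p : ℝ} (hp : 0 < p) (n : ℕ) (hpn : p ≤ (n : ℝ) + 1) :
    ((n : ℝ) + 1 - p) / ((n : ℝ) + 1) ≤ (((n : ℝ) + 1) / ((n : ℝ) + 2)) ^ p := by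
  have hn1 : (0:ℝ) < (n : ℝ) + 1 := by positivity
  have hn2 : (0:ℝ) < (n : ℝ) + 2 := by positivity
  rcases le_or_gt p 1 with hp1 | hp1
  · -- use (1 + 1/(n+1))^p ≤ 1 + p/(n+1)
    have hb := rpow_one_add_le_one_add_mul_self
      (s := 1 / ((n : ℝ) + 1)) (le_trans (by norm_num) (by positivity : (0:ℝ) ≤ 1 / ((n:ℝ)+1))) hp.le hp1
    have he : (1 : ℝ) + 1 / ((n : ℝ) + 1) = ((n : ℝ) + 2) / ((n : ℝ) + 1) := by
      field_simp; ring
    rw [he] at hb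
    have hpos : (0:ℝ) < (((n : ℝ) + 2) / ((n : ℝ) + 1)) ^ p := rpow_pos_of_pos (by positivity) _
    have hx : ((n:ℝ)+1)/((n:ℝ)+2) = ((((n:ℝ)+2)/((n:ℝ)+1)))⁻¹ := by rw [inv_div]
    rw [hx, Real.inv_rpow (by positivity)]
    have hb3 : 1 + p * (1 / ((n:ℝ) + 1)) = ((n:ℝ) + 1 + p) / ((n:ℝ) + 1) := by field_simp
    rw [hb3] at hb
    have h7 : (((n:ℝ) + 1 + p) / ((n:ℝ) + 1))⁻¹ ≤ ((((n:ℝ)+2)/((n:ℝ)+1)) ^ p)⁻¹ :=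
      inv_anti₀ hpos hb
    refine le_trans ?_ h7
    rw [inv_div, div_le_div_iff₀ hn1 (by linarith)]
    nlinarith [sq_nonneg p]
  · -- Bernoulli with s = -1/(n+2), p ≥ 1
    have hm1 : (-1 : ℝ) ≤ -(1 / ((n : ℝ) + 2)) := by
      have : 1/((n:ℝ)+2) ≤ 1 := by rw [div_le_one hn2]; linarith
      linarith
    have hb := one_add_mul_self_le_rpow_one_add
      (s := -(1 / ((n : ℝ) + 2))) hm1 hp1.le
    have he : (1 : ℝ) + -(1 / ((n : ℝ) + 2)) = ((n : ℝ) + 1) / ((n : ℝ) + 2) := by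
      field_simp; ring
    rw [he] at hb
    have h4 : p/((n:ℝ)+2) ≤ p/((n:ℝ)+1) := div_le_div_of_nonneg_left hp.le hn1 (by linarith)
    have h5 : ((n:ℝ)+1-p)/((n:ℝ)+1) = 1 - p/((n:ℝ)+1) := by field_simp
    have h6 : 1 + p * -(1/((n:ℝ)+2)) = 1 - p/((n:ℝ)+2) := by ring
    rw [h6] at hb
    rw [h5]
    linarith

lemma bSeq_bound (γ : ℝ) (hγ : -1 < γ) :
    ∃ C : ℝ, 0 < C ∧ ∀ n : ℕ, 1 ≤ n → |bSeq γ n| ≤ C / ((n:ℝ) + 1) ^ (γ + 1) := by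
  set p := γ + 1 with hpdef
  have hp : 0 < p := by simp [hpdef]; linarith
  set N0 := max 1 ⌈γ⌉₊ with hN0
  set C := (∑ m ∈ Finset.Icc 1 N0, |bSeq γ m| * ((m:ℝ)+1) ^ p) + 1 with hC
  have hCpos : 0 < C := by
    have : 0 ≤ ∑ m ∈ Finset.Icc 1 N0, |bSeq γ m| * ((m:ℝ)+1) ^ p :=
      Finset.sum_nonneg fun m _ => mul_nonneg (abs_nonneg _) (rpow_nonneg (by positivity) _)
    linarith
  have claim1 : ∀ n : ℕ, 1 ≤ n → n ≤ N0 → |bSeq γ n| ≤ C / ((n:ℝ) + 1) ^ p := by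
    intro n h1 h2
    have hpos : (0:ℝ) < ((n:ℝ) + 1) ^ p := rpow_pos_of_pos (by positivity) _
    rw [le_div_iff₀ hpos]
    have hmem : n ∈ Finset.Icc 1 N0 := Finset.mem_Icc.2 ⟨h1, h2⟩
    have := Finset.single_le_sum
      (f := fun m => |bSeq γ m| * ((m:ℝ)+1) ^ p)
      (fun m _ => mul_nonneg (abs_nonneg _) (rpow_nonneg (by positivity) _)) hmem
    simp only [hC]
    linarith
  have claim2 : ∀ n : ℕ, N0 ≤ n → |bSeq γ n| ≤ C / ((n:ℝ) + 1) ^ p := by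
    intro n hn
    induction n, hn using Nat.le_induction with
    | base => exact claim1 N0 (le_max_left 1 _) le_rfl
    | succ n hn ih =>
      have hγn : γ ≤ (n : ℝ) := by
        calc γ ≤ (⌈γ⌉₊ : ℝ) := Nat.le_ceil γ
        _ ≤ (N0 : ℝ) := by exact_mod_cast Nat.cast_le.2 (le_max_right 1 _)
        _ ≤ (n : ℝ) := by exact_mod_cast hn
      have habs := abs_bSeq_succ γ n hγn
      have hkey := key_ineq hp n (by simp [hpdef]; linarith)
      have hpos1 : (0:ℝ) < ((n:ℝ) + 1) ^ p := rpow_pos_of_pos (by positivity) _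
      have hpos2 : (0:ℝ) < ((n:ℝ) + 2) ^ p := rpow_pos_of_pos (by positivity) _
      have hsub : ((n:ℝ) - γ) / ((n:ℝ)+1) = ((n:ℝ) + 1 - p) / ((n:ℝ)+1) := by
        rw [hpdef]; ring_nf
      have step1 : |bSeq γ (n+1)| ≤ (C / ((n:ℝ) + 1) ^ p) * ((((n:ℝ)+1)/((n:ℝ)+2)) ^ p) := by
        rw [habs, hsub]
        exact mul_le_mul ih hkey (div_nonneg (by linarith) (by positivity)) (by positivity)
      have hcast : ((n+1:ℕ):ℝ) + 1 = (n:ℝ) + 2 := by push_cast; ring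
      rw [hcast]
      refine step1.trans (le_of_eq ?_)
      rw [Real.div_rpow (by positivity) (by positivity)]
      field_simp
  refine ⟨C, hCpos, fun n h1 => ?_⟩
  rcases le_total n N0 with h | h
  · exact claim1 n h1 h
  · exact claim2 n h

lemma bSeq_tendsto (γ : ℝ) (hγ : -1 < γ) : Tendsto (bSeq γ) atTop (nhds 0) := by
  obtain ⟨C, hC, hb⟩ := bSeq_bound γ hγ
  have hdiv : Tendsto (fun n : ℕ => C / ((n:ℝ) + 1) ^ (γ + 1)) atTop (nhds 0) := by
    apply Tendsto.div_atTop (tendsto_const_nhds)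
    exact (tendsto_rpow_atTop (by linarith)).comp
      ((tendsto_atTop_add_const_right _ 1 tendsto_natCast_atTop_atTop))
  apply squeeze_zero_norm' _ hdiv
  filter_upwards [eventually_ge_atTop 1] with n hn
  exact hb n hn

lemma sum_bSeq (β : ℝ) (N : ℕ) :
    ∑ n ∈ Finset.range (N + 1), bSeq β n = bSeq (β - 1) N := by
  induction N with
  | zero => simp [bSeq]
  | succ N ih =>
    rw [Finset.sum_range_succ, ih]
    have h1 : ((Nat.factorial N : ℝ)) ≠ 0 := Nat.cast_ne_zero.2 (Nat.factorial_ne_zero N)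
    have h2 : ((N : ℝ) + 1) ≠ 0 := by positivity
    have e1 : ∏ i ∈ Finset.range (N+1), (β - (i:ℝ)) = β * ∏ i ∈ Finset.range N, (β - 1 - (i:ℝ)) := by
      rw [Finset.prod_range_succ' (fun i => β - (i:ℝ)) N]
      rw [Finset.prod_congr rfl (fun i _ => by push_cast; ring :
        ∀ i ∈ Finset.range N, β - ((i+1:ℕ):ℝ) = β - 1 - (i:ℝ))]
      push_cast
      ring
    have e2 : ∏ i ∈ Finset.range (N+1), (β - 1 - (i:ℝ))
        = (∏ i ∈ Finset.range N, (β - 1 - (i:ℝ))) * (β - 1 - N) := Finset.prod_range_succ _ _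
    rw [bSeq, bSeq, bSeq, Nat.factorial_succ, e1, e2]
    push_cast
    field_simp
    ring

lemma bSeq_summable (β : ℝ) (hβ : 0 < β) : Summable (bSeq β) := by
  obtain ⟨C, hC, hb⟩ := bSeq_bound β (by linarith)
  have hs : Summable (fun n : ℕ => 1 / ((n:ℝ) + 1) ^ (β + 1)) := by
    have h0 : Summable (fun n : ℕ => 1 / ((n:ℝ)) ^ (β + 1)) :=
      Real.summable_one_div_nat_rpow.2 (by linarith)
    have h1 := (summable_nat_add_iff 1).2 h0
    have h2 : (fun n : ℕ => 1 / ((n:ℝ) + 1) ^ (β + 1)) = fun n : ℕ => 1 / ((↑(n+1)):ℝ) ^ (β + 1) := by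
      funext n; push_cast; ring_nf
    rw [h2]
    exact h1
  have hs' : Summable (fun n : ℕ => (C + 1) * (1 / ((n:ℝ) + 1) ^ (β + 1))) :=
    hs.mul_left (C + 1)
  apply Summable.of_norm_bounded hs'
  intro n
  rcases Nat.eq_zero_or_pos n with rfl | hn
  · simp only [bSeq_zero, norm_one, Nat.cast_zero, zero_add, Real.one_rpow]
    norm_num
    linarith
  · refine (hb n hn).trans ?_
    rw [mul_one_div]
    gcongr
    linarith

lemma bSeq_hasSum (β : ℝ) (hβ : 0 < β) : HasSum (bSeq β) 0 := by
  have hs := bSeq_summable β hβ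
  have h1 := hs.hasSum.tendsto_sum_nat
  have h2 : Tendsto (fun N : ℕ => ∑ n ∈ Finset.range (N + 1), bSeq β n) atTop
      (nhds (∑' n, bSeq β n)) := h1.comp (tendsto_add_atTop_nat 1)
  have h3 : Tendsto (fun N : ℕ => bSeq (β - 1) N) atTop (nhds (∑' n, bSeq β n)) := by
    apply h2.congr
    intro N; exact sum_bSeq β N
  have h4 := bSeq_tendsto (β - 1) (by linarith)
  have h5 : ∑' n, bSeq β n = 0 := tendsto_nhds_unique h3 h4
  rw [← h5]; exact hs.hasSum

lemma prod_desc (j : ℕ) : ∀ m : ℕ, ∏ t ∈ Finset.range j, (((j + m : ℕ) : ℝ) - t)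
    = (Nat.factorial (j + m)) / (Nat.factorial m) := by
  induction j with
  | zero =>
    intro m
    simp [div_self (Nat.cast_ne_zero.2 (Nat.factorial_ne_zero m) : ((Nat.factorial m : ℝ)) ≠ 0)]
  | succ j ih =>
    intro m
    have h1 : ((Nat.factorial m : ℝ)) ≠ 0 := Nat.cast_ne_zero.2 (Nat.factorial_ne_zero m)
    have h2 : ((Nat.factorial (m+1) : ℝ)) ≠ 0 := Nat.cast_ne_zero.2 (Nat.factorial_ne_zero _)
    rw [Finset.prod_range_succ]
    have e0 : ∀ t : ℕ, ((j + 1 + m : ℕ) : ℝ) - t = ((j + (m + 1) : ℕ) : ℝ) - t := by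
      intro t; push_cast; ring
    rw [Finset.prod_congr rfl (fun t _ => e0 t), ih (m + 1)]
    have e1 : j + 1 + m = j + (m + 1) := by omega
    rw [e1, Nat.factorial_succ m]
    push_cast
    field_simp
    ring

lemma key_hasSum (α : ℝ) (j : ℕ) (hj : (j:ℝ) < α) :
    HasSum (fun n : ℕ => bSeq α n * ∏ t ∈ Finset.range j, ((n:ℝ) - t)) 0 := by
  set β := α - j with hβdef
  have hβ : 0 < β := by rw [hβdef]; linarith
  set A := (-1:ℝ)^j * ∏ i ∈ Finset.range j, (α - i) with hA
  set g : ℕ → ℝ := fun n => if j ≤ n then bSeq β (n - j) else 0 with hg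
  have hgsum : HasSum g 0 := by
    have h0 := bSeq_hasSum β hβ
    have he : (fun n : ℕ => g (n + j)) = bSeq β := by
      funext n
      simp [hg, Nat.le_add_left, Nat.add_sub_cancel]
    have h1 : HasSum (fun n => g (n + j)) 0 := by rw [he]; exact h0
    have h2 := (hasSum_nat_add_iff (f := g) j).1 h1
    have h3 : ∑ i ∈ Finset.range j, g i = 0 := by
      apply Finset.sum_eq_zero
      intro i hi
      simp [hg, Nat.not_le.2 (Finset.mem_range.1 hi)]
    rw [h3, zero_add] at h2
    exact h2
  have heq : ∀ n : ℕ, bSeq α n * ∏ t ∈ Finset.range j, ((n:ℝ) - t) = A * g n := by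
    intro n
    rcases lt_or_ge n j with h | h
    · have hz : ∏ t ∈ Finset.range j, ((n:ℝ) - t) = 0 :=
        Finset.prod_eq_zero (Finset.mem_range.2 h) (by simp)
      have hgz : g n = 0 := by simp [hg, Nat.not_le.2 h]
      rw [hz, hgz, mul_zero, mul_zero]
    · obtain ⟨m, rfl⟩ : ∃ m, n = j + m := ⟨n - j, by omega⟩
      have hgn : g (j + m) = bSeq β m := by
        simp [hg, Nat.le_add_right, Nat.add_sub_cancel_left]
      rw [hgn, prod_desc j m]
      have hf1 : ((Nat.factorial (j+m) : ℝ)) ≠ 0 := Nat.cast_ne_zero.2 (Nat.factorial_ne_zero _)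
      have hf2 : ((Nat.factorial m : ℝ)) ≠ 0 := Nat.cast_ne_zero.2 (Nat.factorial_ne_zero _)
      rw [bSeq, bSeq, hA]
      rw [Finset.prod_range_add (fun i => α - (i:ℝ)) j m]
      rw [Finset.prod_congr rfl (fun i _ => by rw [hβdef]; push_cast; ring :
        ∀ i ∈ Finset.range m, α - ((j + i : ℕ):ℝ) = β - (i:ℝ))]
      field_simp
      ring
  have h := hgsum.mul_left A
  rw [mul_zero] at h
  have hfe : (fun n : ℕ => bSeq α n * ∏ t ∈ Finset.range j, ((n:ℝ) - t)) = fun n => A * g n :=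
    funext heq
  rw [hfe]
  exact h

lemma poly_hasSum (α : ℝ) : ∀ d : ℕ, (d:ℝ) < α → ∀ P : Polynomial ℝ, P.natDegree ≤ d →
    HasSum (fun n : ℕ => bSeq α n * P.eval (n:ℝ)) 0 := by
  intro d
  induction d with
  | zero =>
    intro hd P hP
    have hc : P = Polynomial.C (P.coeff 0) := Polynomial.eq_C_of_natDegree_le_zero hP
    have h0 : 0 < α := by simpa using hd
    have h := (bSeq_hasSum α h0).mul_right (P.coeff 0)
    rw [zero_mul] at h
    have hfe : (fun n : ℕ => bSeq α n * P.eval (n:ℝ)) = fun n => bSeq α n * P.coeff 0 := by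
      funext n
      rw [hc]
      simp
    rw [hfe]
    exact h
  | succ d ih =>
    intro hd P hP
    set c := P.coeff (d+1) with hc
    set dp : Polynomial ℝ := ∏ t ∈ Finset.range (d+1), (Polynomial.X - Polynomial.C (t:ℝ))
      with hdp
    have hmon : ∀ t ∈ Finset.range (d+1), (Polynomial.X - Polynomial.C (t:ℝ)).Monic :=
      fun t _ => Polynomial.monic_X_sub_C _
    have hmonic : dp.Monic := Polynomial.monic_prod_of_monic _ _ hmon
    have hdeg : dp.natDegree = d+1 := by
      rw [hdp, Polynomial.natDegree_prod_of_monic _ _ hmon]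
      simp only [Polynomial.natDegree_X_sub_C, Finset.sum_const, Finset.card_range,
        smul_eq_mul, mul_one]
    set Q := P - Polynomial.C c * dp with hQ
    have hdpc : dp.coeff (d+1) = 1 := by
      rw [← hdeg]
      exact hmonic.coeff_natDegree
    have hQc : Q.coeff (d+1) = 0 := by
      rw [hQ, Polynomial.coeff_sub, Polynomial.coeff_C_mul, hdpc, ← hc]
      ring
    have hQd : Q.natDegree ≤ d := by
      rw [Polynomial.natDegree_le_iff_coeff_eq_zero]
      intro N hN
      rcases eq_or_lt_of_le (Nat.succ_le_of_lt hN) with h | h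
      · rw [← h]; exact hQc
      · have hQdeg1 : Q.natDegree ≤ d + 1 :=
          le_trans (Polynomial.natDegree_sub_le _ _)
            (max_le hP (le_trans (Polynomial.natDegree_C_mul_le _ _) hdeg.le))
        exact Polynomial.coeff_eq_zero_of_natDegree_lt (lt_of_le_of_lt hQdeg1 h)
    have hd' : (d:ℝ) < α := by push_cast at hd; linarith
    have h1 := ih hd' Q hQd
    have h2 : HasSum (fun n : ℕ => bSeq α n * (∏ t ∈ Finset.range (d+1), ((n:ℝ) - t)) * c) 0 := by
      have h := (key_hasSum α (d+1) (by push_cast at hd ⊢; linarith)).mul_right c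
      rw [zero_mul] at h
      exact h
    have h3 := h1.add h2
    rw [add_zero] at h3
    have hfe : (fun n : ℕ => bSeq α n * P.eval (n:ℝ))
        = fun n : ℕ => bSeq α n * Q.eval (n:ℝ)
          + bSeq α n * (∏ t ∈ Finset.range (d+1), ((n:ℝ) - t)) * c := by
      funext n
      have hev : dp.eval (n:ℝ) = ∏ t ∈ Finset.range (d+1), ((n:ℝ) - t) := by
        rw [hdp, Polynomial.eval_prod]
        exact Finset.prod_congr rfl fun t _ => by simp
      have : Q.eval (n:ℝ) = P.eval (n:ℝ) - c * dp.eval (n:ℝ) := by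
        rw [hQ]; simp
      rw [this, hev]
      ring
    rw [hfe]
    exact h3


end aux

open Finset Filter Real in
/-- `(1-s)^{k-1/2}` lies in `H_{2k-2}^0`: coefficients are `O(n^{-(2k+1)/2})`
and orthogonal to polynomials of degree `≤ k-1`. -/
theorem stmt_10 (k : ℕ) (hk : 1 ≤ k) :
    (∃ C : ℝ, ∀ n : ℕ, 1 ≤ n →
      |cSeq k n| ≤ C / (n : ℝ) ^ ((2 * (k : ℝ) + 1) / 2)) ∧
    (∀ P : Polynomial ℝ, P.natDegree ≤ k - 1 →
      HasSum (fun n : ℕ => cSeq k n * P.eval (n : ℝ)) 0) := by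
  have hk1 : (1:ℝ) ≤ (k:ℝ) := by exact_mod_cast hk
  have hcb : ∀ n : ℕ, cSeq k n = bSeq ((k:ℝ) - 1/2) n := fun n => rfl
  constructor
  · obtain ⟨C, hC, hb⟩ := bSeq_bound ((k:ℝ) - 1/2) (by linarith)
    refine ⟨C, fun n hn => ?_⟩
    have hexp : (k:ℝ) - 1/2 + 1 = (2*(k:ℝ)+1)/2 := by ring
    have h1 := hb n hn
    rw [hexp] at h1
    have hn0 : (0:ℝ) < (n:ℝ) := by exact_mod_cast hn
    have hple : (n:ℝ) ^ ((2*(k:ℝ)+1)/2) ≤ ((n:ℝ)+1) ^ ((2*(k:ℝ)+1)/2) :=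
      Real.rpow_le_rpow hn0.le (by linarith) (by positivity)
    calc |cSeq k n| = |bSeq ((k:ℝ) - 1/2) n| := by rw [hcb]
    _ ≤ C / ((n:ℝ)+1) ^ ((2*(k:ℝ)+1)/2) := h1
    _ ≤ C / (n:ℝ) ^ ((2*(k:ℝ)+1)/2) :=
        div_le_div_of_nonneg_left hC.le (rpow_pos_of_pos hn0 _) hple
  · intro P hP
    have hcast : ((k-1:ℕ):ℝ) = (k:ℝ) - 1 := by
      rw [Nat.cast_sub hk]; norm_num
    have hα : ((k-1:ℕ):ℝ) < (k:ℝ) - 1/2 := by rw [hcast]; linarith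
    have h := poly_hasSum ((k:ℝ)-1/2) (k-1) hα P hP
    have hfe : (fun n : ℕ => cSeq k n * P.eval (n:ℝ))
        = fun n : ℕ => bSeq ((k:ℝ)-1/2) n * P.eval (n:ℝ) := by
      funext n; rw [hcb]
    rw [hfe]
    exact h
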